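/- arXiv:1312.1269 — 3 statements merged into one kernel-verified Lean document; each statement's English description precedes it below -/
import Mathlib

section
/- In the category of topological spaces, the pushout of a topological embedding along an arbitrary continuous map is again a topological embedding. That is, if i : C → B is an injective continuous map which is an embedding (C carries the topology induced from B) and s : C → A is any continuous map, then the induced map A → A ⊔_C B to the pushout is an embedding. -/
/-!
Both halves of "embedding" are detected by maps out of the pushout, which its universal property
provides. An open `U ⊆ A` is a continuous map to Sierpiński space; since `i` is inducing,
`s⁻¹ U = i⁻¹ V` for an open `V ⊆ B`, so `(· ∈ U)` and `(· ∈ V)` glue to a map on the pushout, and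
`U` is the preimage of the open set where it is true. For injectivity, glue `a ↦ {a}` and
`b ↦ s (i⁻¹ {b})` into `Set A` with the indiscrete topology; they agree on `C` because `i` is
injective.
-/

open CategoryTheory Limits Topology

universe u

namespace TopCat

variable {A B C : TopCat.{u}} (s : C ⟶ A) {i : C ⟶ B}

lemma pushout_inl_desc_apply {X : TopCat.{u}} (f : A ⟶ X) (g : B ⟶ X) (h : s ≫ f = i ≫ g)
    (a : A) : pushout.desc f g h (pushout.inl s i a) = f a :=
  ConcreteCategory.congr_hom (pushout.inl_desc f g h) a

theorem pushout_inl_injective (hi : Function.Injective i) :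
    Function.Injective (pushout.inl s i) := by
  let _ : TopologicalSpace (Set A) := ⊤
  let f : A ⟶ of (Set A) := ofHom ⟨fun a => {a}, continuous_top⟩
  let g : B ⟶ of (Set A) := ofHom ⟨fun b => s '' (i ⁻¹' {b}), continuous_top⟩
  have hfg : s ≫ f = i ≫ g := by
    ext c : 2
    simp [f, g, hi.eq_iff, eq_comm]
  intro a a' h
  have hfa := congr(pushout.desc f g hfg $h)
  rw [pushout_inl_desc_apply, pushout_inl_desc_apply] at hfa
  exact Set.singleton_injective hfa

theorem exists_isOpen_preimage_pushout_inl (hi : IsInducing i) {U : Set A} (hU : IsOpen U) :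
    ∃ W : Set ↑(pushout s i), IsOpen W ∧ pushout.inl s i ⁻¹' W = U := by
  obtain ⟨V, hV, hVU⟩ := hi.isOpen_iff.mp (hU.preimage s.hom.continuous)
  let χU : A ⟶ of (ULift.{u} Prop) :=
    ofHom ⟨fun a => ⟨a ∈ U⟩, continuous_uliftUp.comp (continuous_Prop.mpr hU)⟩
  let χV : B ⟶ of (ULift.{u} Prop) :=
    ofHom ⟨fun b => ⟨b ∈ V⟩, continuous_uliftUp.comp (continuous_Prop.mpr hV)⟩
  have hχ : s ≫ χU = i ≫ χV := by
    ext c : 2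
    simp [χU, χV, ← Set.mem_preimage, hVU]
  let χ := pushout.desc χU χV hχ
  refine ⟨{x | (χ x).down}, continuous_Prop.mp (continuous_uliftDown.comp χ.hom.continuous), ?_⟩
  ext a
  rw [Set.mem_preimage, Set.mem_ofPred_eq, pushout_inl_desc_apply]
  rfl

theorem pushout_inl_isInducing (hi : IsInducing i) : IsInducing (pushout.inl s i) :=
  ⟨le_antisymm (pushout.inl s i).hom.continuous.le_induced fun _ hU =>
    isOpen_induced_iff.mpr (exists_isOpen_preimage_pushout_inl s hi hU)⟩

end TopCat

/-- In the category of topological spaces, the pushout of a topological embedding along an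
arbitrary continuous map is again a topological embedding: if `i : C ⟶ B` is an embedding
and `s : C ⟶ A` is any continuous map, then the induced map `A ⟶ A ⊔_C B` into the pushout
is an embedding. -/
theorem stmt4 {A B C : TopCat.{u}} (i : C ⟶ B) (s : C ⟶ A)
    (hi : Topology.IsEmbedding i) :
    Topology.IsEmbedding (pushout.inl s i : A ⟶ pushout s i) :=
  ⟨TopCat.pushout_inl_isInducing s hi.isInducing, TopCat.pushout_inl_injective s hi.injective⟩
end

section
/- Topological embeddings are closed under transfinite composition: if X₀ → X₁ → X₂ → ⋯ is a λ-sequence of topological spaces in which each map X_β → X_{β+1} is an embedding (and at limit ordinals the space is the colimit of the preceding ones), then the canonical map X₀ → colim_β X_β is an embedding. -/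
open CategoryTheory Limits

variable {J : Type u} [LinearOrder J]

/-- The inclusion functor `Set.Iio j ⥤ J`. -/
def iioIncl (j : J) : (Set.Iio j : Set J) ⥤ J :=
  (Subtype.mono_coe (· ∈ Set.Iio j)).functor

/-- For `F : J ⥤ Top` and `j : J`, the canonical cocone with point `F.obj j` over the
restriction of `F` to the elements below `j`. -/
def coconeBelow (F : J ⥤ TopCat.{u}) (j : J) : Cocone (iioIncl j ⋙ F) where
  pt := F.obj j
  ι :=
    { app := fun i => F.map (homOfLE i.2.le)
      naturality := by
        intro i k f
        dsimp [iioIncl, Monotone.functor]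
        rw [← F.map_comp, Category.comp_id]
        congr 1 }

/-!
A continuous map is an embedding iff it has the left lifting property against the maps to the
point from the Sierpiński space (every open set of the source is a preimage of an open set, i.e.
the map is inducing) and from an indiscrete two-point space (every function on the source
extends, i.e. the map is injective). Morphisms with a left lifting property are closed under
transfinite composition: a lift is built by transfinite induction, using the lifting property of
`F j ⟶ F (j + 1)` at successor stages and the colimit property of `F j` at limit stages.
-/

universe u

open Topology HasLiftingProperty.transfiniteComposition

theorem hasLiftingProperty_iff_of_isTerminal {C : Type*} [Category C] {A B X Y : C}
    (i : A ⟶ B) (p : X ⟶ Y) (hY : IsTerminal Y) :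
    HasLiftingProperty i p ↔ ∀ f : A ⟶ X, ∃ l : B ⟶ X, i ≫ l = f := by
  constructor
  · intro _ f
    have sq : CommSq f i p (hY.from B) := ⟨hY.hom_ext _ _⟩
    exact ⟨sq.lift, sq.fac_left⟩
  · refine fun h => ⟨fun {f} {_} _ => ?_⟩
    obtain ⟨l, hl⟩ := h f
    exact ⟨⟨{ l := l, fac_left := hl, fac_right := hY.hom_ext _ _ }⟩⟩

namespace TopCat

/-- `Prop` carries the Sierpiński topology: morphisms `X ⟶ sierpinski` are the open sets of `X`. -/
abbrev sierpinski : TopCat.{u} := of (ULift Prop)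

abbrev indiscreteProp : TopCat.{u} := trivial.obj (ULift Prop)

theorem isInducing_iff_forall_exists_comp_eq {X Y : TopCat.{u}} (f : X ⟶ Y) :
    IsInducing f ↔ ∀ g : X ⟶ sierpinski, ∃ l : Y ⟶ sierpinski, f ≫ l = g := by
  constructor
  · intro hf g
    have hU : IsOpen {x | (g x).down} :=
      continuous_Prop.mp (continuous_uliftDown.comp g.hom.continuous)
    obtain ⟨V, hV, hVU⟩ := hf.isOpen_iff.mp hU
    refine ⟨ofHom ⟨fun y => ⟨y ∈ V⟩, continuous_uliftUp.comp (isOpen_iff_continuous_mem.mp hV)⟩,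
      ?_⟩
    ext x
    exact Set.ext_iff.mp hVU x
  · intro h
    refine ⟨TopologicalSpace.ext_iff.mpr fun U => ⟨fun hU => ?_, ?_⟩⟩
    · obtain ⟨l, hl⟩ := h (ofHom ⟨fun x => ⟨x ∈ U⟩,
        continuous_uliftUp.comp (isOpen_iff_continuous_mem.mp hU)⟩)
      refine isOpen_induced_iff.mpr ⟨{y | (l y).down},
        continuous_Prop.mp (continuous_uliftDown.comp l.hom.continuous), ?_⟩
      ext x
      exact iff_of_eq (congrArg ULift.down (ConcreteCategory.congr_hom hl x))
    · rintro ⟨V, hV, rfl⟩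
      exact hV.preimage f.hom.continuous

theorem injective_iff_forall_exists_comp_eq {X Y : TopCat.{u}} (f : X ⟶ Y) :
    Function.Injective f ↔ ∀ g : X ⟶ indiscreteProp, ∃ l : Y ⟶ indiscreteProp, f ≫ l = g := by
  constructor
  · intro hf g
    refine ⟨@ofHom _ _ _ ⊤
      (@ContinuousMap.mk _ _ _ ⊤ (Function.extend f g fun _ => ⟨False⟩) continuous_top), ?_⟩
    ext x
    exact hf.extend_apply g (fun _ => ⟨False⟩) x
  · intro h x y hxy
    obtain ⟨l, hl⟩ := h (@ofHom _ _ _ ⊤ (@ContinuousMap.mk _ _ _ ⊤ (fun z => ⟨z = y⟩) continuous_top))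
    have hx : l (f x) = ⟨x = y⟩ := ConcreteCategory.congr_hom hl x
    have hy : l (f y) = ⟨y = y⟩ := ConcreteCategory.congr_hom hl y
    rw [hxy, hy] at hx
    exact cast (congrArg ULift.down hx) rfl

theorem isEmbedding_iff_hasLiftingProperty {X Y : TopCat.{u}} (f : X ⟶ Y) :
    IsEmbedding f ↔ HasLiftingProperty f (isTerminalPUnit.from sierpinski) ∧
      HasLiftingProperty f (isTerminalPUnit.from indiscreteProp) := by
  rw [hasLiftingProperty_iff_of_isTerminal _ _ isTerminalPUnit,
    hasLiftingProperty_iff_of_isTerminal _ _ isTerminalPUnit,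
    ← isInducing_iff_forall_exists_comp_eq, ← injective_iff_forall_exists_comp_eq]
  exact Topology.isEmbedding_iff (f := f)

end TopCat

/-- Topological embeddings are closed under transfinite composition: if `F` is a
λ-sequence of topological spaces (indexed by a well-ordered set `J` with bottom element),
i.e. each map `F.obj j ⟶ F.obj (j+1)` is an embedding and at each limit index the space
`F.obj j` is the colimit of the preceding ones, then the canonical map from `F.obj ⊥` to
the colimit of the whole sequence is an embedding. -/
theorem stmt5 [SuccOrder J] [OrderBot J] [WellFoundedLT J]
    (F : J ⥤ TopCat.{u})
    (hsucc : ∀ j : J, ¬ IsMax j →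
      Topology.IsEmbedding (F.map (homOfLE (Order.le_succ j))))
    (hlim : ∀ j : J, Order.IsSuccLimit j → Nonempty (IsColimit (coconeBelow F j)))
    (c : Cocone F) (hc : IsColimit c) :
    Topology.IsEmbedding (c.ι.app ⊥) := by
  -- `coconeBelow F j` is definitionally `(Set.principalSegIio j).cocone F`.
  have : F.IsWellOrderContinuous := ⟨hlim⟩
  simp only [TopCat.isEmbedding_iff_hasLiftingProperty] at hsucc ⊢
  exact ⟨hasLiftingProperty_ι_app_bot hc fun j hj => (hsucc j hj).1,
    hasLiftingProperty_ι_app_bot hc fun j hj => (hsucc j hj).2⟩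
end

section
/- Let J be a groupoid, let α, β : J → Top be functors, and let η : α ⇒ β be a natural transformation such that η_j : α(j) → β(j) is a topological embedding for every object j of J. Then the induced map colim(α) → colim(β) between colimits is a topological embedding. -/
/-!
Over a groupoid the relation generating a colimit of types is already an equivalence relation,
so two points of `colim F` agree iff some morphism of `J` carries one to the other. Consequently
the colimit injections are open maps (the saturation of an open set is the union of its
translates), and `colimMap η` is injective when every `η_j` is. Given `U` open in `colim α`,
write each `ι_j⁻¹ U` as `η_j⁻¹ W_j` with `W_j` open; then `⋃ j, ι_j (W_j)` is open in `colim β`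
and its preimage under `colimMap η` is `U`.
-/

open CategoryTheory Limits

universe u

namespace CategoryTheory

lemma Functor.colimitTypeRel_equivalence {J : Type*} [Groupoid J] (F : J ⥤ Type*) :
    _root_.Equivalence F.ColimitTypeRel where
  refl p := ⟨𝟙 _, by simp⟩
  symm := by
    rintro p q ⟨g, hg⟩
    exact ⟨Groupoid.inv g, by simp [hg]⟩
  trans := by
    rintro p q r ⟨g, hg⟩ ⟨g', hg'⟩
    exact ⟨g ≫ g', by simp [hg, hg']⟩

namespace Limits.Concrete

variable {C : Type*} [Category C] {FC : C → C → Type*} {CC : C → Type*}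
variable [∀ X Y, FunLike (FC X Y) (CC X) (CC Y)] [ConcreteCategory C FC]
variable {J : Type*} [Groupoid J]

theorem colimit_rep_eq_iff_of_groupoid (F : J ⥤ C) [HasColimit F]
    [PreservesColimit F (forget C)] {i j : J} (x : ToType (F.obj i)) (y : ToType (F.obj j)) :
    colimit.ι F i x = colimit.ι F j y ↔ ∃ g : i ⟶ j, F.map g x = y := by
  refine ⟨fun h => ?_, fun ⟨g, hg⟩ => hg ▸ (colimit.w_apply F g x).symm⟩
  have h' : colimit.ι (F ⋙ forget C) i x = colimit.ι (F ⋙ forget C) j y := by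
    rw [← ι_preservesColimitIso_hom (forget C) F, ← ι_preservesColimitIso_hom (forget C) F]
    exact congr_arg _ h
  obtain ⟨g, hg⟩ := (F ⋙ forget C).colimitTypeRel_equivalence.eqvGen_iff.1 (Types.colimit_eq h')
  exact ⟨g, hg.symm⟩

theorem preimage_ι_image_ι_of_groupoid (F : J ⥤ C) [HasColimit F]
    [PreservesColimit F (forget C)] (j k : J) (U : Set (ToType (F.obj j))) :
    colimit.ι F k ⁻¹' (colimit.ι F j '' U) = ⋃ g : k ⟶ j, F.map g ⁻¹' U := by
  ext y
  simp only [Set.mem_preimage, Set.mem_image, Set.mem_iUnion]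
  simp_rw [eq_comm (b := colimit.ι F k y), colimit_rep_eq_iff_of_groupoid]
  constructor
  · rintro ⟨_, hu, g, rfl⟩
    exact ⟨g, hu⟩
  · rintro ⟨g, hg⟩
    exact ⟨_, hg, g, rfl⟩

variable {F G : J ⥤ C} [HasColimit F] [HasColimit G] (η : F ⟶ G)

theorem ι_colimMap_apply (j : J) (x : ToType (F.obj j)) :
    colimMap η (colimit.ι F j x) = colimit.ι G j (η.app j x) := by
  simpa only [ConcreteCategory.comp_apply] using ConcreteCategory.congr_hom (ι_colimMap η j) x

theorem colimMap_injective_of_groupoid [PreservesColimit F (forget C)]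
    [PreservesColimit G (forget C)] (hη : ∀ j, Function.Injective (η.app j)) :
    Function.Injective (colimMap η) := by
  intro a b hab
  obtain ⟨i, x, rfl⟩ := colimit_exists_rep F a
  obtain ⟨j, y, rfl⟩ := colimit_exists_rep F b
  simp only [ι_colimMap_apply, colimit_rep_eq_iff_of_groupoid] at hab ⊢
  obtain ⟨g, hg⟩ := hab
  exact ⟨g, hη j (by rw [← hg, NatTrans.naturality_apply])⟩

theorem preimage_colimMap_image_ι_of_groupoid [PreservesColimit F (forget C)]
    [PreservesColimit G (forget C)] (j : J) (W : Set (ToType (G.obj j))) :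
    colimMap η ⁻¹' (colimit.ι G j '' W) = colimit.ι F j '' (η.app j ⁻¹' W) := by
  ext a
  obtain ⟨k, x, rfl⟩ := colimit_exists_rep F a
  simp only [Set.mem_preimage, Set.mem_image, ι_colimMap_apply]
  simp_rw [eq_comm (b := colimit.ι G k _), eq_comm (b := colimit.ι F k _),
    colimit_rep_eq_iff_of_groupoid]
  constructor
  · rintro ⟨_, hw, g, rfl⟩
    exact ⟨_, by rwa [NatTrans.naturality_apply], g, rfl⟩
  · rintro ⟨_, hz, g, rfl⟩
    exact ⟨_, by rwa [NatTrans.naturality_apply] at hz, g, rfl⟩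

end Limits.Concrete
end CategoryTheory

namespace TopCat

variable {J : Type u} [Groupoid.{u} J]

theorem isOpenMap_colimit_ι_of_groupoid (F : J ⥤ TopCat.{u}) (j : J) :
    IsOpenMap (colimit.ι F j) := fun U hU => by
  rw [colimit_isOpen_iff]
  intro k
  rw [Concrete.preimage_ι_image_ι_of_groupoid]
  exact isOpen_iUnion fun g => hU.preimage (F.map g).hom.continuous

end TopCat

/-- Let `J` be a groupoid, `α, β : J ⥤ Top` functors and `η : α ⟶ β` a natural
transformation such that each component `η_j` is a topological embedding.  Then the
induced map `colim α ⟶ colim β` between the colimits is a topological embedding. -/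
theorem stmt6 {J : Type u} [Groupoid.{u} J] (α β : J ⥤ TopCat.{u}) (η : α ⟶ β)
    (h : ∀ j : J, Topology.IsEmbedding (η.app j)) :
    Topology.IsEmbedding (colimMap η : colimit α ⟶ colimit β) := by
  refine ⟨⟨le_antisymm (colimMap η).hom.continuous.le_induced fun U hU => ?_⟩,
    Concrete.colimMap_injective_of_groupoid η fun j => (h j).injective⟩
  choose W hW hWU using fun j =>
    (h j).isInducing.isOpen_iff.1 (hU.preimage (colimit.ι α j).hom.continuous)
  refine isOpen_induced_iff.2 ⟨⋃ j, colimit.ι β j '' W j,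
    isOpen_iUnion fun j => TopCat.isOpenMap_colimit_ι_of_groupoid β j _ (hW j), ?_⟩
  have hcover : ⋃ j, Set.range (colimit.ι α j) = Set.univ :=
    Set.iUnion_eq_univ_iff.2 fun a => by simpa using Concrete.colimit_exists_rep α a
  simp only [Set.preimage_iUnion, Concrete.preimage_colimMap_image_ι_of_groupoid, hWU,
    Set.image_preimage_eq_inter_range, ← Set.inter_iUnion, hcover, Set.inter_univ]
end
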